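/- Weak modal refinement is compositional with respect to asynchronous composition: if S' ≤_m* S, T' ≤_m* T, and S and T are composable, then S' and T' are composable and S' ⊗_as T' ≤_m* S ⊗_as T. -/

import Mathlib

/-- A modal I/O-transition system (MIO): states, an initial state, a signature of
input, output and internal actions (pairwise disjoint subsets of the action
universe `A`), may-transitions and must-transitions with must ⊆ may. -/
structure MIO (A : Type) where
  State : Type
  start : State
  inp : Set A
  out : Set A
  intl : Set A
  may : State → A → State → Prop
  must : State → A → State → Prop
  inp_out : ∀ a, a ∈ inp → a ∈ out → False
  inp_intl : ∀ a, a ∈ inp → a ∈ intl → False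
  out_intl : ∀ a, a ∈ out → a ∈ intl → False
  must_sub : ∀ s a s', must s a s' → may s a s'

namespace MIO

variable {A B : Type}

/-- The set of all actions of a MIO. -/
def act (S : MIO A) : Set A := S.inp ∪ S.out ∪ S.intl

/-- Two MIOs have the same signature. -/
def SigEq (S T : MIO A) : Prop := S.inp = T.inp ∧ S.out = T.out ∧ S.intl = T.intl

/-- Strong modal refinement `S ≤_m T`. -/
def StrongRefines (S T : MIO A) : Prop :=
  SigEq S T ∧
  ∃ R : S.State → T.State → Prop, R S.start T.start ∧
    ∀ s t, R s t →
      (∀ a t', T.must t a t' → ∃ s', S.must s a s' ∧ R s' t') ∧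
      (∀ a s', S.may s a s' → ∃ t', T.may t a t' ∧ R s' t')

/-- One internal must-transition. -/
def tauMust (S : MIO A) (s s' : S.State) : Prop := ∃ a ∈ S.intl, S.must s a s'

/-- Finitely many (possibly zero) internal must-transitions. -/
def tauMustStar (S : MIO A) : S.State → S.State → Prop := Relation.ReflTransGen S.tauMust

/-- One internal may-transition. -/
def tauMay (S : MIO A) (s s' : S.State) : Prop := ∃ a ∈ S.intl, S.may s a s'

/-- Finitely many (possibly zero) internal may-transitions. -/
def tauMayStar (S : MIO A) : S.State → S.State → Prop := Relation.ReflTransGen S.tauMay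

/-- Weak modal refinement `S ≤_m* T`. -/
def WeakRefines (S T : MIO A) : Prop :=
  SigEq S T ∧
  ∃ R : S.State → T.State → Prop, R S.start T.start ∧
    ∀ s t, R s t →
      (∀ a ∈ T.inp ∪ T.out, ∀ t', T.must t a t' →
        ∃ s1 s2 s', S.tauMustStar s s1 ∧ S.must s1 a s2 ∧ S.tauMustStar s2 s' ∧ R s' t') ∧
      (∀ a ∈ T.intl, ∀ t', T.must t a t' → ∃ s', S.tauMustStar s s' ∧ R s' t') ∧
      (∀ a ∈ S.inp ∪ S.out, ∀ s', S.may s a s' →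
        ∃ t1 t2 t', T.tauMayStar t t1 ∧ T.may t1 a t2 ∧ T.tauMayStar t2 t' ∧ R s' t') ∧
      (∀ a ∈ S.intl, ∀ s', S.may s a s' → ∃ t', T.tauMayStar t t' ∧ R s' t')

/-- Shared actions of two MIOs. -/
def shared (S T : MIO A) : Set A := S.act ∩ T.act

/-- Two MIOs are (syntactically) composable if their actions overlap only on
complementary types. -/
def Composable (S T : MIO A) : Prop :=
  shared S T ⊆ (S.inp ∩ T.out) ∪ (T.inp ∩ S.out)

/-- Synchronous composition `S ⊗_sy T` of composable MIOs. -/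
def syncComp (S T : MIO A) (_h : Composable S T) : MIO A where
  State := S.State × T.State
  start := (S.start, T.start)
  inp := (S.inp ∪ T.inp) \ shared S T
  out := (S.out ∪ T.out) \ shared S T
  intl := S.intl ∪ T.intl ∪ shared S T
  may p a p' :=
    (a ∈ shared S T ∧ S.may p.1 a p'.1 ∧ T.may p.2 a p'.2) ∨
    (a ∈ S.act ∧ a ∉ shared S T ∧ S.may p.1 a p'.1 ∧ p'.2 = p.2) ∨
    (a ∈ T.act ∧ a ∉ shared S T ∧ T.may p.2 a p'.2 ∧ p'.1 = p.1)
  must p a p' :=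
    (a ∈ shared S T ∧ S.must p.1 a p'.1 ∧ T.must p.2 a p'.2) ∨
    (a ∈ S.act ∧ a ∉ shared S T ∧ S.must p.1 a p'.1 ∧ p'.2 = p.2) ∨
    (a ∈ T.act ∧ a ∉ shared S T ∧ T.must p.2 a p'.2 ∧ p'.1 = p.1)
  inp_out := by
    intro a ha hb
    have h1 := S.inp_out a; have h2 := T.inp_out a
    simp only [Set.mem_diff, Set.mem_union, shared, act, Set.mem_inter_iff] at ha hb
    tauto
  inp_intl := by
    intro a ha hb
    have h1 := S.inp_intl a; have h2 := T.inp_intl a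
    simp only [Set.mem_diff, Set.mem_union, shared, act, Set.mem_inter_iff] at ha hb
    tauto
  out_intl := by
    intro a ha hb
    have h1 := S.out_intl a; have h2 := T.out_intl a
    simp only [Set.mem_diff, Set.mem_union, shared, act, Set.mem_inter_iff] at ha hb
    tauto
  must_sub := by
    rintro p a p' (⟨h1, h2, h3⟩ | ⟨h1, h2, h3, h4⟩ | ⟨h1, h2, h3, h4⟩)
    · exact Or.inl ⟨h1, S.must_sub _ _ _ h2, T.must_sub _ _ _ h3⟩
    · exact Or.inr (Or.inl ⟨h1, h2, S.must_sub _ _ _ h3, h4⟩)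
    · exact Or.inr (Or.inr ⟨h1, h2, T.must_sub _ _ _ h3, h4⟩)

/-- Reachability (w.r.t. may-transitions) from the initial state. -/
def Reachable (M : MIO A) (s : M.State) : Prop :=
  Relation.ReflTransGen (fun x y => ∃ a, M.may x a y) M.start s

/-- Strong modal compatibility `S ⇄_sc T`. -/
def StrongCompat (S T : MIO A) : Prop :=
  ∃ h : Composable S T,
    ∀ p : S.State × T.State, (syncComp S T h).Reachable p →
      (∀ a ∈ S.out ∩ T.inp, ∀ s', S.may p.1 a s' → ∃ t', T.must p.2 a t') ∧
      (∀ a ∈ T.out ∩ S.inp, ∀ t', T.may p.2 a t' → ∃ s', S.must p.1 a s')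

/-- Weak modal compatibility `S ⇄_wc T`. -/
def WeakCompat (S T : MIO A) : Prop :=
  ∃ h : Composable S T,
    ∀ p : S.State × T.State, (syncComp S T h).Reachable p →
      (∀ a ∈ S.out ∩ T.inp, ∀ s', S.may p.1 a s' →
        ∃ t1 t', T.tauMustStar p.2 t1 ∧ T.must t1 a t') ∧
      (∀ a ∈ T.out ∩ S.inp, ∀ t', T.may p.2 a t' →
        ∃ s1 s', S.tauMustStar p.1 s1 ∧ S.must s1 a s')

/-- Finite executions: `Trace M s as s'` means `M` can go from `s` to `s'` by
a sequence of may-transitions labelled by the list of actions `as`. -/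
inductive Trace (M : MIO A) : M.State → List A → M.State → Prop
  | nil (s : M.State) : Trace M s [] s
  | cons {s s' s'' : M.State} {a : A} {as : List A} :
      M.may s a s' → Trace M s' as s'' → Trace M s (a :: as) s''

/-- Renaming the actions of a MIO along an injective function. -/
def rename (f : A → B) (hf : Function.Injective f) (S : MIO A) : MIO B where
  State := S.State
  start := S.start
  inp := f '' S.inp
  out := f '' S.out
  intl := f '' S.intl
  may s b s' := ∃ a, b = f a ∧ S.may s a s'
  must s b s' := ∃ a, b = f a ∧ S.must s a s'
  inp_out := by
    rintro b ⟨a1, h1, rfl⟩ ⟨a2, h2, heq⟩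
    obtain rfl := hf heq
    exact S.inp_out a2 h1 h2
  inp_intl := by
    rintro b ⟨a1, h1, rfl⟩ ⟨a2, h2, heq⟩
    obtain rfl := hf heq
    exact S.inp_intl a2 h1 h2
  out_intl := by
    rintro b ⟨a1, h1, rfl⟩ ⟨a2, h2, heq⟩
    obtain rfl := hf heq
    exact S.out_intl a2 h1 h2
  must_sub := by
    rintro s b s' ⟨a, rfl, h⟩
    exact ⟨a, rfl, S.must_sub _ _ _ h⟩

-- Tagging function: actions in `o` become the fresh "queue input" actions `n^▷`
-- (encoded as `Sum.inr n`), all other actions are kept (as `Sum.inl a`).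
open Classical in
noncomputable def tagged (o : Set A) : A → A ⊕ A :=
  fun a => if a ∈ o then Sum.inr a else Sum.inl a

theorem tagged_injective (o : Set A) : Function.Injective (tagged o) := by
  classical
  intro a b h
  by_cases ha : a ∈ o <;> by_cases hb : b ∈ o <;>
    simp [tagged, ha, hb] at h <;> tauto

/-- The queue MIO `Q_o`: a FIFO buffer for messages in `o`. States are finite
strings over `A` (with reachable states being strings over `o`), inputs are the
tagged actions `n^▷ = Sum.inr n`, outputs the actions `n = Sum.inl n` for `n ∈ o`.
Enqueue at the front, dequeue from the back; may- and must-transitions coincide. -/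
def queueMIO (o : Set A) : MIO (A ⊕ A) where
  State := List A
  start := []
  inp := Sum.inr '' o
  out := Sum.inl '' o
  intl := ∅
  may s b s' :=
    (∃ n ∈ o, b = Sum.inr n ∧ s' = n :: s) ∨ (∃ n ∈ o, b = Sum.inl n ∧ s = s' ++ [n])
  must s b s' :=
    (∃ n ∈ o, b = Sum.inr n ∧ s' = n :: s) ∨ (∃ n ∈ o, b = Sum.inl n ∧ s = s' ++ [n])
  inp_out := by rintro b ⟨n, hn, rfl⟩ ⟨m, hm, h⟩; simp at h
  inp_intl := by rintro b _ h; simp at h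
  out_intl := by rintro b _ h; simp at h
  must_sub := fun _ _ _ h => h

theorem omega_composable (o : Set A) (S : MIO A) (ho : o ⊆ S.out) :
    Composable (rename (tagged o) (tagged_injective o) S) (queueMIO o) := by
  classical
  rintro b ⟨hb1, hb2⟩
  have hq : (∃ n ∈ o, Sum.inr n = b) ∨ (∃ n ∈ o, Sum.inl n = b) := by
    simpa [queueMIO, act, Set.image, Set.mem_union] using hb2
  have hr : ∃ a, ((a ∈ S.inp ∨ a ∈ S.out) ∨ a ∈ S.intl) ∧ tagged o a = b := by
    simpa [rename, act, ← Set.image_union] using hb1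
  obtain ⟨a, _, ha⟩ := hr
  rcases hq with ⟨n, hn, hb⟩ | ⟨n, hn, hb⟩
  · right
    constructor
    · exact ⟨n, hn, hb⟩
    · refine ⟨n, ho hn, ?_⟩
      rw [← hb]; simp [tagged, hn]
  · exfalso
    rw [← hb] at ha
    by_cases h : a ∈ o
    · simp [tagged, h] at ha
    · simp [tagged, h] at ha
      exact h (ha ▸ hn)

/-- `Ω_o(S)`: the MIO `S` with an output queue for `o ⊆ out_S`, i.e. the
synchronous product of the renamed MIO `S_o^▷` with the queue MIO `Q_o`. -/
noncomputable def Omega (o : Set A) (S : MIO A) (ho : o ⊆ S.out) : MIO (A ⊕ A) :=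
  syncComp (rename (tagged o) (tagged_injective o) S) (queueMIO o) (omega_composable o S ho)

/-- The outputs of `S` that are inputs of `T`. -/
def oOf (S T : MIO A) : Set A := S.out ∩ T.inp

/-- `Ω_{o_S}(S)` where `o_S = out_S ∩ in_T`. -/
noncomputable def OmegaC (S T : MIO A) : MIO (A ⊕ A) :=
  Omega (oOf S T) S Set.inter_subset_left

/-- Composability of the queue-extended MIOs, i.e. definedness of `S ⊗_as T`. -/
def AsyncComposable (S T : MIO A) : Prop := Composable (OmegaC S T) (OmegaC T S)

/-- Asynchronous composition `S ⊗_as T = Ω_{o_S}(S) ⊗_sy Ω_{o_T}(T)`. -/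
noncomputable def asyncComp (S T : MIO A) (h : AsyncComposable S T) : MIO (A ⊕ A) :=
  syncComp (OmegaC S T) (OmegaC T S) h

/-- Asynchronous modal compatibility `S ⇄_ac T`. -/
def AsyncCompat (S T : MIO A) : Prop :=
  Composable S T ∧ WeakCompat (OmegaC S T) (OmegaC T S)

/-!
Weak modal refinement preserves signatures, so `S'` and `T'` are composable together with `S` and
`T`, and the queued action sets `o_S = out_S ∩ in_T` and `o_T` are the same for the refined pair.
Refinement is preserved by injective renaming and, since the queue `Q_o` refines itself, by the
synchronous product that defines `Ω_o`; so `Ω_{o_S}(S') ≤_m* Ω_{o_S}(S)`, and compositionality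
of `⊗_sy` finishes the proof. For `⊗_sy` the product of the two refinement relations works: a
step on a shared action pairs two visible weak steps of the components, which synchronise into a
weak internal step of the product, and every other step is a lifted step of one component.
-/

section Signature

variable {S' S T' T : MIO A}

theorem SigEq.act_eq (h : SigEq S' S) : S'.act = S.act := by
  obtain ⟨hi, ho, hl⟩ := h
  rw [act, act, hi, ho, hl]

theorem SigEq.shared_eq (hS : SigEq S' S) (hT : SigEq T' T) : shared S' T' = shared S T := by
  rw [shared, shared, hS.act_eq, hT.act_eq]

theorem SigEq.composable (hS : SigEq S' S) (hT : SigEq T' T) (h : Composable S T) :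
    Composable S' T' := by
  rwa [Composable, hS.shared_eq hT, hS.1, hS.2.1, hT.1, hT.2.1]

theorem SigEq.syncComp (hS : SigEq S' S) (hT : SigEq T' T) (h : Composable S T)
    (h' : Composable S' T') : SigEq (syncComp S' T' h') (syncComp S T h) := by
  have hsh := hS.shared_eq hT
  obtain ⟨hSi, hSo, hSl⟩ := hS
  obtain ⟨hTi, hTo, hTl⟩ := hT
  simp only [SigEq, MIO.syncComp, hsh, hSi, hSo, hSl, hTi, hTo, hTl, and_self]

theorem SigEq.rename (f : A → B) (hf : Function.Injective f) (h : SigEq S' S) :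
    SigEq (rename f hf S') (rename f hf S) :=
  ⟨congrArg (f '' ·) h.1, congrArg (f '' ·) h.2.1, congrArg (f '' ·) h.2.2⟩

theorem SigEq.oOf_eq (hS : SigEq S' S) (hT : SigEq T' T) : oOf S' T' = oOf S T := by
  rw [oOf, oOf, hS.2.1, hT.1]

theorem notMem_intl_of_mem_inp_union_out {a : A} (ha : a ∈ S.inp ∪ S.out) : a ∉ S.intl :=
  ha.elim (S.inp_intl a) (S.out_intl a)

theorem mem_inp_union_out_of_notMem_intl {a : A} (ha : a ∈ S.act) (hi : a ∉ S.intl) :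
    a ∈ S.inp ∪ S.out :=
  ha.resolve_right hi

end Signature

section Matched

variable {S T : MIO A}

def MustMatched (R : S.State → T.State → Prop) (s : S.State) (t : T.State) : Prop :=
  (∀ a ∈ T.inp ∪ T.out, ∀ t', T.must t a t' →
    ∃ s1 s2 s', S.tauMustStar s s1 ∧ S.must s1 a s2 ∧ S.tauMustStar s2 s' ∧ R s' t') ∧
  (∀ a ∈ T.intl, ∀ t', T.must t a t' → ∃ s', S.tauMustStar s s' ∧ R s' t')

def MayMatched (R : S.State → T.State → Prop) (s : S.State) (t : T.State) : Prop :=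
  (∀ a ∈ S.inp ∪ S.out, ∀ s', S.may s a s' →
    ∃ t1 t2 t', T.tauMayStar t t1 ∧ T.may t1 a t2 ∧ T.tauMayStar t2 t' ∧ R s' t') ∧
  (∀ a ∈ S.intl, ∀ s', S.may s a s' → ∃ t', T.tauMayStar t t' ∧ R s' t')

theorem weakRefines_iff_matched :
    WeakRefines S T ↔ SigEq S T ∧ ∃ R : S.State → T.State → Prop,
      R S.start T.start ∧ ∀ s t, R s t → MustMatched R s t ∧ MayMatched R s t := by
  simp only [WeakRefines, MustMatched, MayMatched, and_assoc]

end Matched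

section SyncComp

variable {U V : MIO A} {a : A}

theorem notMem_shared_of_mem_intl_left (h : Composable U V) (ha : a ∈ U.intl) :
    a ∉ shared U V := fun hsh =>
  (h hsh).elim (fun hio => U.inp_intl a hio.1 ha) (fun hio => U.out_intl a hio.2 ha)

theorem notMem_shared_of_mem_intl_right (h : Composable U V) (ha : a ∈ V.intl) :
    a ∉ shared U V := fun hsh =>
  (h hsh).elim (fun hio => V.out_intl a hio.2 ha) (fun hio => V.inp_intl a hio.1 ha)

theorem mem_inp_union_out_of_mem_shared_left (h : Composable U V) (ha : a ∈ shared U V) :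
    a ∈ U.inp ∪ U.out :=
  (h ha).elim (fun hio => .inl hio.1) (fun hio => .inr hio.2)

theorem mem_inp_union_out_of_mem_shared_right (h : Composable U V) (ha : a ∈ shared U V) :
    a ∈ V.inp ∪ V.out :=
  (h ha).elim (fun hio => .inr hio.2) (fun hio => .inl hio.1)

theorem notMem_shared_of_mem_syncComp_inp_union_out (h : Composable U V)
    (ha : a ∈ (syncComp U V h).inp ∪ (syncComp U V h).out) : a ∉ shared U V :=
  ha.elim (·.2) (·.2)

theorem mem_inp_union_out_left_of_syncComp (h : Composable U V) (hU : a ∈ U.act)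
    (ha : a ∈ (syncComp U V h).inp ∪ (syncComp U V h).out) : a ∈ U.inp ∪ U.out :=
  mem_inp_union_out_of_notMem_intl hU fun hi =>
    notMem_intl_of_mem_inp_union_out ha (.inl (.inl hi))

theorem mem_inp_union_out_right_of_syncComp (h : Composable U V) (hV : a ∈ V.act)
    (ha : a ∈ (syncComp U V h).inp ∪ (syncComp U V h).out) : a ∈ V.inp ∪ V.out :=
  mem_inp_union_out_of_notMem_intl hV fun hi =>
    notMem_intl_of_mem_inp_union_out ha (.inl (.inr hi))

theorem mem_intl_left_of_syncComp (h : Composable U V) (hU : a ∈ U.act)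
    (hns : a ∉ shared U V) (ha : a ∈ (syncComp U V h).intl) : a ∈ U.intl := by
  rcases ha with (hi | hi) | hsh
  exacts [hi, absurd ⟨hU, .inr hi⟩ hns, absurd hsh hns]

theorem mem_intl_right_of_syncComp (h : Composable U V) (hV : a ∈ V.act)
    (hns : a ∉ shared U V) (ha : a ∈ (syncComp U V h).intl) : a ∈ V.intl := by
  rcases ha with (hi | hi) | hsh
  exacts [absurd ⟨.inr hi, hV⟩ hns, hi, absurd hsh hns]

theorem tauMustStar.syncComp_left (h : Composable U V) {s s' : U.State}
    (hs : U.tauMustStar s s') (t : V.State) : (syncComp U V h).tauMustStar (s, t) (s', t) :=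
  Relation.ReflTransGen.lift (·, t) (fun _ _ ⟨a, ha, hm⟩ => ⟨a, .inl (.inl ha),
    .inr (.inl ⟨.inr ha, notMem_shared_of_mem_intl_left h ha, hm, rfl⟩)⟩) _ _ hs

theorem tauMustStar.syncComp_right (h : Composable U V) {t t' : V.State}
    (ht : V.tauMustStar t t') (s : U.State) : (syncComp U V h).tauMustStar (s, t) (s, t') :=
  Relation.ReflTransGen.lift (s, ·) (fun _ _ ⟨a, ha, hm⟩ => ⟨a, .inl (.inr ha),
    .inr (.inr ⟨.inr ha, notMem_shared_of_mem_intl_right h ha, hm, rfl⟩)⟩) _ _ ht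

theorem tauMayStar.syncComp_left (h : Composable U V) {s s' : U.State}
    (hs : U.tauMayStar s s') (t : V.State) : (syncComp U V h).tauMayStar (s, t) (s', t) :=
  Relation.ReflTransGen.lift (·, t) (fun _ _ ⟨a, ha, hm⟩ => ⟨a, .inl (.inl ha),
    .inr (.inl ⟨.inr ha, notMem_shared_of_mem_intl_left h ha, hm, rfl⟩)⟩) _ _ hs

theorem tauMayStar.syncComp_right (h : Composable U V) {t t' : V.State}
    (ht : V.tauMayStar t t') (s : U.State) : (syncComp U V h).tauMayStar (s, t) (s, t') :=
  Relation.ReflTransGen.lift (s, ·) (fun _ _ ⟨a, ha, hm⟩ => ⟨a, .inl (.inr ha),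
    .inr (.inr ⟨.inr ha, notMem_shared_of_mem_intl_right h ha, hm, rfl⟩)⟩) _ _ ht

theorem tauMustStar_syncComp_of_mem_shared (h : Composable U V) (ha : a ∈ shared U V)
    {s s₁ s₂ s' : U.State} {t t₁ t₂ t' : V.State}
    (hs₁ : U.tauMustStar s s₁) (hs : U.must s₁ a s₂) (hs₂ : U.tauMustStar s₂ s')
    (ht₁ : V.tauMustStar t t₁) (ht : V.must t₁ a t₂) (ht₂ : V.tauMustStar t₂ t') :
    (syncComp U V h).tauMustStar (s, t) (s', t') :=
  (hs₁.syncComp_left h t).trans <| (ht₁.syncComp_right h s₁).trans <|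
    .head ⟨a, .inr ha, .inl ⟨ha, hs, ht⟩⟩ <|
      (hs₂.syncComp_left h t₂).trans (ht₂.syncComp_right h s')

theorem tauMayStar_syncComp_of_mem_shared (h : Composable U V) (ha : a ∈ shared U V)
    {s s₁ s₂ s' : U.State} {t t₁ t₂ t' : V.State}
    (hs₁ : U.tauMayStar s s₁) (hs : U.may s₁ a s₂) (hs₂ : U.tauMayStar s₂ s')
    (ht₁ : V.tauMayStar t t₁) (ht : V.may t₁ a t₂) (ht₂ : V.tauMayStar t₂ t') :
    (syncComp U V h).tauMayStar (s, t) (s', t') :=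
  (hs₁.syncComp_left h t).trans <| (ht₁.syncComp_right h s₁).trans <|
    .head ⟨a, .inr ha, .inl ⟨ha, hs, ht⟩⟩ <|
      (hs₂.syncComp_left h t₂).trans (ht₂.syncComp_right h s')

variable {U' V' : MIO A} {RU : U'.State → U.State → Prop} {RV : V'.State → V.State → Prop}
  {s' : U'.State} {s : U.State} {t' : V'.State} {t : V.State}

theorem MustMatched.syncComp (hU : MustMatched RU s' s) (hV : MustMatched RV t' t)
    (hs : RU s' s) (ht : RV t' t) (sigU : SigEq U' U) (sigV : SigEq V' V)
    (h : Composable U V) (h' : Composable U' V') :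
    MustMatched (S := syncComp U' V' h') (T := syncComp U V h)
      (fun p q => RU p.1 q.1 ∧ RV p.2 q.2) (s', t') (s, t) := by
  have hsh := sigU.shared_eq sigV
  refine ⟨?_, ?_⟩
  · rintro a ha ⟨s₁, t₁⟩
      (⟨hsha, -⟩ | ⟨hact, hns, hm, rfl : t₁ = t⟩ | ⟨hact, hns, hm, rfl : s₁ = s⟩)
    · exact absurd hsha (notMem_shared_of_mem_syncComp_inp_union_out h ha)
    · obtain ⟨u₁, u₂, u, hu₁, hu, hu₂, hR⟩ :=
        hU.1 a (mem_inp_union_out_left_of_syncComp h hact ha) s₁ hm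
      exact ⟨(u₁, t'), (u₂, t'), (u, t'), hu₁.syncComp_left h' t',
        .inr (.inl ⟨sigU.act_eq ▸ hact, hsh ▸ hns, hu, rfl⟩), hu₂.syncComp_left h' t', hR, ht⟩
    · obtain ⟨v₁, v₂, v, hv₁, hv, hv₂, hR⟩ :=
        hV.1 a (mem_inp_union_out_right_of_syncComp h hact ha) t₁ hm
      exact ⟨(s', v₁), (s', v₂), (s', v), hv₁.syncComp_right h' s',
        .inr (.inr ⟨sigV.act_eq ▸ hact, hsh ▸ hns, hv, rfl⟩), hv₂.syncComp_right h' s', hs, hR⟩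
  · rintro a ha ⟨s₁, t₁⟩
      (⟨hsha, hmU, hmV⟩ | ⟨hact, hns, hm, rfl : t₁ = t⟩ | ⟨hact, hns, hm, rfl : s₁ = s⟩)
    · obtain ⟨u₁, u₂, u, hu₁, hu, hu₂, hRu⟩ :=
        hU.1 a (mem_inp_union_out_of_mem_shared_left h hsha) s₁ hmU
      obtain ⟨v₁, v₂, v, hv₁, hv, hv₂, hRv⟩ :=
        hV.1 a (mem_inp_union_out_of_mem_shared_right h hsha) t₁ hmV
      exact ⟨(u, v), tauMustStar_syncComp_of_mem_shared h' (hsh ▸ hsha) hu₁ hu hu₂ hv₁ hv hv₂,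
        hRu, hRv⟩
    · obtain ⟨u, hu, hR⟩ := hU.2 a (mem_intl_left_of_syncComp h hact hns ha) s₁ hm
      exact ⟨(u, t'), hu.syncComp_left h' t', hR, ht⟩
    · obtain ⟨v, hv, hR⟩ := hV.2 a (mem_intl_right_of_syncComp h hact hns ha) t₁ hm
      exact ⟨(s', v), hv.syncComp_right h' s', hs, hR⟩

theorem MayMatched.syncComp (hU : MayMatched RU s' s) (hV : MayMatched RV t' t)
    (hs : RU s' s) (ht : RV t' t) (sigU : SigEq U' U) (sigV : SigEq V' V)
    (h : Composable U V) (h' : Composable U' V') :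
    MayMatched (S := syncComp U' V' h') (T := syncComp U V h)
      (fun p q => RU p.1 q.1 ∧ RV p.2 q.2) (s', t') (s, t) := by
  have hsh := sigU.shared_eq sigV
  refine ⟨?_, ?_⟩
  · rintro a ha ⟨s₁, t₁⟩
      (⟨hsha, -⟩ | ⟨hact, hns, hm, rfl : t₁ = t'⟩ | ⟨hact, hns, hm, rfl : s₁ = s'⟩)
    · exact absurd hsha (notMem_shared_of_mem_syncComp_inp_union_out h' ha)
    · obtain ⟨u₁, u₂, u, hu₁, hu, hu₂, hR⟩ :=
        hU.1 a (mem_inp_union_out_left_of_syncComp h' hact ha) s₁ hm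
      exact ⟨(u₁, t), (u₂, t), (u, t), hu₁.syncComp_left h t,
        .inr (.inl ⟨sigU.act_eq ▸ hact, hsh ▸ hns, hu, rfl⟩), hu₂.syncComp_left h t, hR, ht⟩
    · obtain ⟨v₁, v₂, v, hv₁, hv, hv₂, hR⟩ :=
        hV.1 a (mem_inp_union_out_right_of_syncComp h' hact ha) t₁ hm
      exact ⟨(s, v₁), (s, v₂), (s, v), hv₁.syncComp_right h s,
        .inr (.inr ⟨sigV.act_eq ▸ hact, hsh ▸ hns, hv, rfl⟩), hv₂.syncComp_right h s, hs, hR⟩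
  · rintro a ha ⟨s₁, t₁⟩
      (⟨hsha, hmU, hmV⟩ | ⟨hact, hns, hm, rfl : t₁ = t'⟩ | ⟨hact, hns, hm, rfl : s₁ = s'⟩)
    · obtain ⟨u₁, u₂, u, hu₁, hu, hu₂, hRu⟩ :=
        hU.1 a (mem_inp_union_out_of_mem_shared_left h' hsha) s₁ hmU
      obtain ⟨v₁, v₂, v, hv₁, hv, hv₂, hRv⟩ :=
        hV.1 a (mem_inp_union_out_of_mem_shared_right h' hsha) t₁ hmV
      exact ⟨(u, v), tauMayStar_syncComp_of_mem_shared h (hsh ▸ hsha) hu₁ hu hu₂ hv₁ hv hv₂,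
        hRu, hRv⟩
    · obtain ⟨u, hu, hR⟩ := hU.2 a (mem_intl_left_of_syncComp h' hact hns ha) s₁ hm
      exact ⟨(u, t), hu.syncComp_left h t, hR, ht⟩
    · obtain ⟨v, hv, hR⟩ := hV.2 a (mem_intl_right_of_syncComp h' hact hns ha) t₁ hm
      exact ⟨(s, v), hv.syncComp_right h s, hs, hR⟩

theorem WeakRefines.syncComp (hU : WeakRefines U' U) (hV : WeakRefines V' V)
    (h : Composable U V) (h' : Composable U' V') :
    WeakRefines (syncComp U' V' h') (syncComp U V h) := by
  obtain ⟨sigU, RU, hRU₀, hRU⟩ := weakRefines_iff_matched.1 hU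
  obtain ⟨sigV, RV, hRV₀, hRV⟩ := weakRefines_iff_matched.1 hV
  refine weakRefines_iff_matched.2
    ⟨sigU.syncComp sigV h h', fun p q => RU p.1 q.1 ∧ RV p.2 q.2, ⟨hRU₀, hRV₀⟩, ?_⟩
  rintro ⟨s', t'⟩ ⟨s, t⟩ ⟨hs, ht⟩
  obtain ⟨hUmust, hUmay⟩ := hRU s' s hs
  obtain ⟨hVmust, hVmay⟩ := hRV t' t ht
  exact ⟨hUmust.syncComp hVmust hs ht sigU sigV h h', hUmay.syncComp hVmay hs ht sigU sigV h h'⟩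

end SyncComp

theorem WeakRefines.refl (M : MIO A) : WeakRefines M M := by
  refine ⟨⟨rfl, rfl, rfl⟩, Eq, rfl, ?_⟩
  rintro s _ rfl
  exact ⟨fun a _ t' hm => ⟨s, t', t', .refl, hm, .refl, rfl⟩,
    fun a ha t' hm => ⟨t', .single ⟨a, ha, hm⟩, rfl⟩,
    fun a _ s' hm => ⟨s, s', s', .refl, hm, .refl, rfl⟩,
    fun a ha s' hm => ⟨s', .single ⟨a, ha, hm⟩, rfl⟩⟩

section Rename

variable (f : A → B) (hf : Function.Injective f) {S' S : MIO A}

theorem tauMustStar.rename {s s' : S.State} (h : S.tauMustStar s s') :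
    (rename f hf S).tauMustStar s s' :=
  Relation.ReflTransGen.lift id (fun _ _ ⟨a, ha, hm⟩ => ⟨f a, ⟨a, ha, rfl⟩, a, rfl, hm⟩) _ _ h

theorem tauMayStar.rename {s s' : S.State} (h : S.tauMayStar s s') :
    (rename f hf S).tauMayStar s s' :=
  Relation.ReflTransGen.lift id (fun _ _ ⟨a, ha, hm⟩ => ⟨f a, ⟨a, ha, rfl⟩, a, rfl, hm⟩) _ _ h

theorem mem_rename_inp_union_out_iff {a : A} :
    f a ∈ (rename f hf S).inp ∪ (rename f hf S).out ↔ a ∈ S.inp ∪ S.out := by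
  show f a ∈ f '' S.inp ∪ f '' S.out ↔ _
  rw [← Set.image_union, hf.mem_set_image]

theorem WeakRefines.rename (h : WeakRefines S' S) :
    WeakRefines (rename f hf S') (rename f hf S) := by
  obtain ⟨sig, R, hR₀, hR⟩ := h
  refine ⟨sig.rename f hf, R, hR₀, fun s t hst => ?_⟩
  obtain ⟨hvis, hint, hvis', hint'⟩ := hR s t hst
  refine ⟨?_, ?_, ?_, ?_⟩
  · rintro _ ha t' ⟨a, rfl, hm⟩
    obtain ⟨s₁, s₂, s', h₁, h, h₂, hR'⟩ :=
      hvis a ((mem_rename_inp_union_out_iff f hf).1 ha) t' hm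
    exact ⟨s₁, s₂, s', h₁.rename f hf, ⟨a, rfl, h⟩, h₂.rename f hf, hR'⟩
  · rintro _ ha t' ⟨a, rfl, hm⟩
    obtain ⟨s', h, hR'⟩ := hint a (hf.mem_set_image.1 ha) t' hm
    exact ⟨s', h.rename f hf, hR'⟩
  · rintro _ ha s' ⟨a, rfl, hm⟩
    obtain ⟨t₁, t₂, t', h₁, h, h₂, hR'⟩ :=
      hvis' a ((mem_rename_inp_union_out_iff f hf).1 ha) s' hm
    exact ⟨t₁, t₂, t', h₁.rename f hf, ⟨a, rfl, h⟩, h₂.rename f hf, hR'⟩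
  · rintro _ ha s' ⟨a, rfl, hm⟩
    obtain ⟨t', h, hR'⟩ := hint' a (hf.mem_set_image.1 ha) s' hm
    exact ⟨t', h.rename f hf, hR'⟩

end Rename

section Omega

@[simp] theorem tagged_eq_inl_iff {o : Set A} {a b : A} :
    tagged o a = Sum.inl b ↔ a ∉ o ∧ a = b := by
  unfold tagged; split_ifs <;> simp [*]

@[simp] theorem tagged_eq_inr_iff {o : Set A} {a b : A} :
    tagged o a = Sum.inr b ↔ a ∈ o ∧ a = b := by
  unfold tagged; split_ifs <;> simp [*]

variable {S' S T' T : MIO A} {o' o : Set A}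

theorem Omega_inp (ho : o ⊆ S.out) : (Omega o S ho).inp = Sum.inl '' S.inp := by
  ext (a | a) <;> simp [Omega, syncComp, rename, queueMIO, shared, act] <;> grind [S.inp_out]

theorem Omega_out (ho : o ⊆ S.out) : (Omega o S ho).out = Sum.inl '' S.out := by
  ext (a | a) <;> simp [Omega, syncComp, rename, queueMIO, shared, act] <;> grind

theorem Omega_act (ho : o ⊆ S.out) :
    (Omega o S ho).act = Sum.inl '' S.act ∪ Sum.inr '' o := by
  ext (a | a) <;> simp [Omega, syncComp, rename, queueMIO, shared, act] <;> grind

-- `Omega` takes a proof of `o ⊆ out`, so propositionally equal queue sets such as `oOf S' T'` and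
-- `oOf S T` cannot be rewritten into each other; the equation `o' = o` is substituted instead.
theorem WeakRefines.omega (h : WeakRefines S' S) (e : o' = o) (ho' : o' ⊆ S'.out)
    (ho : o ⊆ S.out) : WeakRefines (Omega o' S' ho') (Omega o S ho) := by
  subst e
  exact (h.rename _ _).syncComp (.refl _) _ _

theorem WeakRefines.omegaC (hS : WeakRefines S' S) (hT : SigEq T' T) :
    WeakRefines (OmegaC S' T') (OmegaC S T) :=
  hS.omega (hS.1.oOf_eq hT) _ _

theorem Composable.omega (h : Composable S T) {oS oT : Set A} (hoS : oS ⊆ S.out)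
    (hoT : oT ⊆ T.out) (hd : Disjoint oS oT) : Composable (Omega oS S hoS) (Omega oT T hoT) := by
  rintro b ⟨hbS, hbT⟩
  rw [Omega_act] at hbS hbT
  rw [Omega_inp, Omega_inp, Omega_out, Omega_out]
  rcases b with a | n
  · simpa using h ⟨by simpa using hbS, by simpa using hbT⟩
  · simp only [Set.mem_union, Set.mem_image, reduceCtorEq, and_false, exists_false,
      Sum.inr.injEq, exists_eq_right, false_or] at hbS hbT
    exact (hd.notMem_of_mem_left hbS hbT).elim

theorem Composable.asyncComposable (h : Composable S T) : AsyncComposable S T :=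
  h.omega _ _ (Set.disjoint_left.2 fun _ hS hT => T.inp_out _ hS.2 hT.1)

end Omega

end MIO

open MIO

/-- Weak modal refinement is compositional w.r.t. asynchronous composition. -/
theorem weakRefines_async_compositional (A : Type) (S S' T T' : MIO A)
    (hS : WeakRefines S' S) (hT : WeakRefines T' T) (h : Composable S T) :
    Composable S' T' ∧
    ∃ (hA : AsyncComposable S T) (hA' : AsyncComposable S' T'),
      WeakRefines (asyncComp S' T' hA') (asyncComp S T hA) := by
  have hA : AsyncComposable S T := h.asyncComposable
  have hΩS := hS.omegaC hT.1
  have hΩT := hT.omegaC hS.1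
  have hA' : AsyncComposable S' T' := hΩS.1.composable hΩT.1 hA
  exact ⟨hS.1.composable hT.1 h, hA, hA', hΩS.syncComp hΩT hA hA'⟩
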